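/- With the setup below, suppose T satisfies Condition 1 or Condition 3 at every vertex of H, but does not satisfy Condition 1 at every vertex of H. Then at least one of the following holds: (i) H has more edges than vertices (k > t); (ii) there are at least two vertices of H at which T does not satisfy Condition 1; (iii) K is connected. -/
import Mathlib


/-- (Lemma `3cases`.)  Suppose `T = (v, w)` satisfies Condition 1 or
Condition 3 at every vertex of `H`, but not Condition 1 at every vertex.  Then: `H` has
more edges than vertices (`k > t`), or there are at least two vertices of `H` where
Condition 1 fails, or `K` is connected (every two vertices of `K` are joined by a walk
in `K`). -/
theorem stmt15
    {t k : ℕ}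
    (H : SimpleGraph (Fin t)) [DecidableRel H.Adj]
    (hHconn : H.Connected) (hHdeg : ∀ b : Fin t, 2 ≤ H.degree b)
    (a : Fin k × Bool → Fin t)
    (ha : ∀ i : Fin k, H.Adj (a (i, false)) (a (i, true)))
    (henum : ∀ e ∈ H.edgeSet, ∃! i : Fin k, e = s(a (i, false), a (i, true)))
    {VG : Type} (G : SimpleGraph VG)
    (v w : Fin k × Bool → VG)
    (hv : ∀ i : Fin k, G.Adj (v (i, false)) (v (i, true)))
    (hw : ∀ i : Fin k, G.Adj (w (i, false)) (w (i, true)))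
    (K : SimpleGraph VG)
    (hK : K = SimpleGraph.fromEdgeSet {e | ∃ i : Fin k,
      e = s(v (i, false), v (i, true)) ∨ e = s(w (i, false), w (i, true))})
    (Cond1 Cond3 : Fin t → Prop)
    (hCond1 : ∀ b, Cond1 b ↔ ((∀ i j : Fin k × Bool, a i = b → a j = b → v i = v j) ∧
      (∀ i j : Fin k × Bool, a i = b → a j = b → w i = w j)))
    (hCond3 : ∀ b, Cond3 b ↔ (∃ x y : VG, ∀ i : Fin k × Bool, a i = b →
      (v i = x ∧ w i = y) ∨ (v i = y ∧ w i = x)))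
    (hall : ∀ b : Fin t, Cond1 b ∨ Cond3 b)
    (hnotall1 : ¬ ∀ b : Fin t, Cond1 b) :
    t < k ∨
    (∃ b₁ b₂ : Fin t, b₁ ≠ b₂ ∧ ¬ Cond1 b₁ ∧ ¬ Cond1 b₂) ∨
    (∀ i j : Fin k × Bool,
      K.Reachable (v i) (v j) ∧ K.Reachable (v i) (w j) ∧
      K.Reachable (w i) (v j) ∧ K.Reachable (w i) (w j)) := by
  classical
  by_cases hkt : t < k
  · exact Or.inl hkt
  by_cases h2 : ∃ b₁ b₂ : Fin t, b₁ ≠ b₂ ∧ ¬ Cond1 b₁ ∧ ¬ Cond1 b₂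
  · exact Or.inr (Or.inl h2)
  push_neg at hkt
  obtain ⟨b₀, hb₀⟩ := not_forall.mp hnotall1
  have honly : ∀ b, b ≠ b₀ → Cond1 b := by
    intro b hb
    by_contra hc
    exact h2 ⟨b, b₀, hb, hc, hb₀⟩
  have hC1 : ∀ b, b ≠ b₀ →
      ((∀ p q : Fin k × Bool, a p = b → a q = b → v p = v q) ∧
       (∀ p q : Fin k × Bool, a p = b → a q = b → w p = w q)) :=
    fun b hb => (hCond1 b).mp (honly b hb)
  -- the enumeration is a bijection onto the edge set
  have equ : Fin k ≃ H.edgeSet := by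
    refine Equiv.ofBijective (fun i => ⟨s(a (i,false), a (i,true)), (ha i)⟩) ⟨?_, ?_⟩
    · intro i j hij
      obtain ⟨i', hi', huniq⟩ := henum s(a (i,false), a (i,true)) (ha i)
      have hij' : s(a (i,false), a (i,true)) = s(a (j,false), a (j,true)) :=
        congrArg Subtype.val hij
      exact (huniq i rfl).trans (huniq j hij').symm
    · rintro ⟨e, he⟩
      obtain ⟨i, hi, -⟩ := henum e he
      exact ⟨i, Subtype.ext hi.symm⟩
  have hcard : H.edgeFinset.card = k := by
    rw [SimpleGraph.edgeFinset_card]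
    exact (Fintype.card_congr equ).symm.trans (Fintype.card_fin k)
  have hsum : ∑ b : Fin t, H.degree b = 2 * k := by
    rw [SimpleGraph.sum_degrees_eq_twice_card_edges, hcard]
  have hdeg2 : ∀ b : Fin t, H.degree b = 2 := by
    have hle : ∀ b ∈ Finset.univ, (2:ℕ) ≤ H.degree b := fun b _ => hHdeg b
    have h1 : (∑ _b : Fin t, (2:ℕ)) ≤ ∑ b : Fin t, H.degree b := Finset.sum_le_sum hle
    have h2' : (∑ b : Fin t, H.degree b) ≤ ∑ _b : Fin t, (2:ℕ) := by
      rw [hsum, Finset.sum_const, Finset.card_univ, Fintype.card_fin, smul_eq_mul]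
      omega
    have heq : (∑ _b : Fin t, (2:ℕ)) = ∑ b : Fin t, H.degree b := le_antisymm h1 h2'
    intro b
    exact ((Finset.sum_eq_sum_iff_of_le hle).mp heq b (Finset.mem_univ b)).symm
  -- fibers of `a` have size equal to the degree
  have hsameidx : ∀ (p q : Fin k × Bool), a p = a q → a (p.1, !p.2) = a (q.1, !q.2) → p = q := by
    rintro ⟨i, s⟩ ⟨j, r⟩ h1 h2
    have he : s(a (i,false), a (i,true)) = s(a (j,false), a (j,true)) := by
      cases s <;> cases r <;>
        simp only [Bool.not_false, Bool.not_true] at h1 h2 <;>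
        rw [Sym2.eq_iff] <;> tauto
    obtain ⟨i', hi', huniq⟩ := henum s(a (i,false), a (i,true)) (ha i)
    have hij : i = j := (huniq i rfl).trans (huniq j he).symm
    subst hij
    have hsr : s = r := by
      cases s <;> cases r
      · rfl
      · exact absurd h1 (ha i).ne
      · exact absurd h1.symm (ha i).ne
      · rfl
    rw [hsr]
  have hfib : ∀ b : Fin t,
      (Finset.univ.filter (fun p : Fin k × Bool => a p = b)).card = H.degree b := by
    intro b
    rw [SimpleGraph.degree]
    apply Finset.card_bij (fun p _ => a (p.1, !p.2))
    · rintro ⟨i, s⟩ hp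
      rw [Finset.mem_filter] at hp
      rw [SimpleGraph.mem_neighborFinset]
      cases s
      · rw [← hp.2]; exact ha i
      · rw [← hp.2]; exact (ha i).symm
    · intro p hp q hq hpq
      rw [Finset.mem_filter] at hp hq
      exact hsameidx p q (hp.2.trans hq.2.symm) hpq
    · intro c hc
      rw [SimpleGraph.mem_neighborFinset] at hc
      obtain ⟨i, hi, -⟩ := henum s(b, c) hc
      rw [Sym2.eq_iff] at hi
      rcases hi with ⟨hb, hc'⟩ | ⟨hb, hc'⟩
      · exact ⟨(i, false), by simp [Finset.mem_filter, hb.symm], hc'.symm⟩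
      · exact ⟨(i, true), by simp [Finset.mem_filter, hb.symm], hc'.symm⟩
  have hfib2 : ∀ b : Fin t,
      (Finset.univ.filter (fun p : Fin k × Bool => a p = b)).card = 2 := by
    intro b; rw [hfib b, hdeg2 b]
  -- Condition 3 data at b₀
  obtain ⟨x, y, hpat⟩ := (hCond3 b₀).mp ((hall b₀).resolve_left hb₀)
  have hnc : ¬ ((∀ p q : Fin k × Bool, a p = b₀ → a q = b₀ → v p = v q) ∧
      (∀ p q : Fin k × Bool, a p = b₀ → a q = b₀ → w p = w q)) :=
    fun h => hb₀ ((hCond1 b₀).mpr h)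
  obtain ⟨p₁, p₂, hp₁, hp₂, hne⟩ :
      ∃ p q : Fin k × Bool, a p = b₀ ∧ a q = b₀ ∧ (v p ≠ v q ∨ w p ≠ w q) := by
    rcases not_and_or.mp hnc with h | h
    · push_neg at h; obtain ⟨p, q, hp, hq, hne⟩ := h; exact ⟨p, q, hp, hq, Or.inl hne⟩
    · push_neg at h; obtain ⟨p, q, hp, hq, hne⟩ := h; exact ⟨p, q, hp, hq, Or.inr hne⟩
  obtain ⟨i₁, i₂, hai₁, hai₂, hvi₁, hwi₁, hvi₂, hwi₂, hxyne⟩ :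
      ∃ i₁ i₂ : Fin k × Bool, a i₁ = b₀ ∧ a i₂ = b₀ ∧ v i₁ = x ∧ w i₁ = y ∧
        v i₂ = y ∧ w i₂ = x ∧ x ≠ y := by
    rcases hpat p₁ hp₁ with ⟨h1v, h1w⟩ | ⟨h1v, h1w⟩ <;>
      rcases hpat p₂ hp₂ with ⟨h2v, h2w⟩ | ⟨h2v, h2w⟩
    · rcases hne with h | h
      · exact absurd (h1v.trans h2v.symm) h
      · exact absurd (h1w.trans h2w.symm) h
    · refine ⟨p₁, p₂, hp₁, hp₂, h1v, h1w, h2v, h2w, ?_⟩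
      rintro rfl
      rcases hne with h | h
      · exact h (h1v.trans h2v.symm)
      · exact h (h1w.trans h2w.symm)
    · refine ⟨p₂, p₁, hp₂, hp₁, h2v, h2w, h1v, h1w, ?_⟩
      rintro rfl
      rcases hne with h | h
      · exact h (h1v.trans h2v.symm)
      · exact h (h1w.trans h2w.symm)
    · rcases hne with h | h
      · exact absurd (h1v.trans h2v.symm) h
      · exact absurd (h1w.trans h2w.symm) h
  obtain ⟨ii₂, s₂⟩ := i₂
  have hi₁₂ne : i₁ ≠ (ii₂, s₂) := by
    intro h; apply hxyne; rw [← hvi₁, h, hvi₂]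
  have hmem : ∀ p : Fin k × Bool, a p = b₀ → p = i₁ ∨ p = (ii₂, s₂) := by
    intro p hp
    have hsub : ({i₁, (ii₂, s₂)} : Finset (Fin k × Bool)) ⊆
        Finset.univ.filter (fun p : Fin k × Bool => a p = b₀) := by
      intro q hq
      rcases Finset.mem_insert.mp hq with rfl | hq
      · simp [Finset.mem_filter, hai₁]
      · rw [Finset.mem_singleton] at hq; subst hq; simp [Finset.mem_filter, hai₂]
    have hcard2 : ({i₁, (ii₂, s₂)} : Finset (Fin k × Bool)).card = 2 := by
      rw [Finset.card_insert_of_notMem (by simp [hi₁₂ne]), Finset.card_singleton]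
    have heq : Finset.univ.filter (fun p : Fin k × Bool => a p = b₀) =
        ({i₁, (ii₂, s₂)} : Finset (Fin k × Bool)) :=
      (Finset.eq_of_subset_of_card_le hsub (by rw [hfib2 b₀, hcard2])).symm
    have hpmem : p ∈ Finset.univ.filter (fun p : Fin k × Bool => a p = b₀) := by
      simp [Finset.mem_filter, hp]
    rw [heq] at hpmem
    simpa using hpmem
  -- K-adjacency along the two families of edges
  have hKv : ∀ i : Fin k, K.Adj (v (i, false)) (v (i, true)) := by
    intro i
    rw [hK, SimpleGraph.fromEdgeSet_adj]
    exact ⟨⟨i, Or.inl rfl⟩, (hv i).ne⟩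
  have hKw : ∀ i : Fin k, K.Adj (w (i, false)) (w (i, true)) := by
    intro i
    rw [hK, SimpleGraph.fromEdgeSet_adj]
    exact ⟨⟨i, Or.inr rfl⟩, (hw i).ne⟩
  -- the crucial step: x and y are joined in K
  have hxyreach : K.Reachable x y := by
    by_contra hnxy
    have hdisj : ∀ z, K.Reachable x z → K.Reachable y z → False :=
      fun z h1 h2 => hnxy (h1.trans h2.symm)
    set σ : Fin t → ZMod 2 :=
      fun b => if b = b₀ then 0 else
        if ∃ p : Fin k × Bool, a p = b ∧ K.Reachable y (v p) then 1 else 0 with hσ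
    have hσval : ∀ (b : Fin t) (p : Fin k × Bool), b ≠ b₀ → a p = b →
        σ b = if K.Reachable y (v p) then 1 else 0 := by
      intro b p hb hp
      simp only [hσ, if_neg hb]
      by_cases hr : K.Reachable y (v p)
      · rw [if_pos ⟨p, hp, hr⟩, if_pos hr]
      · rw [if_neg ?_, if_neg hr]
        rintro ⟨q, hq, hrq⟩
        exact hr (((hC1 b hb).1 q p hq hp) ▸ hrq)
    have hσb₀ : σ b₀ = 0 := by simp [hσ]
    have hedge : ∀ i : Fin k,
        σ (a (i, false)) + σ (a (i, true)) = if i = ii₂ then 1 else 0 := by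
      intro i
      by_cases hii : i = ii₂
      · subst hii
        rw [if_pos rfl]
        cases s₂
        · -- a (i,false) = b₀, v (i,false) = y
          have hothne : a (i, true) ≠ b₀ := fun hcon => (ha i).ne (hai₂.trans hcon.symm)
          have hσq : σ (a (i, true)) = 1 := by
            rw [hσval _ (i, true) hothne rfl, if_pos (hvi₂ ▸ (hKv i).reachable)]
          have hσb : σ (a (i, false)) = 0 := by simp [hσ, hai₂]
          rw [hσb, hσq, zero_add]
        · have hothne : a (i, false) ≠ b₀ := fun hcon => (ha i).ne (hcon.trans hai₂.symm)
          have hσq : σ (a (i, false)) = 1 := by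
            rw [hσval _ (i, false) hothne rfl, if_pos (hvi₂ ▸ (hKv i).symm.reachable)]
          have hσb : σ (a (i, true)) = 0 := by simp [hσ, hai₂]
          rw [hσb, hσq, add_zero]
      · rw [if_neg hii]
        by_cases hf : a (i, false) = b₀
        · have hpi₁ : (i, false) = i₁ :=
            (hmem (i, false) hf).resolve_right (fun h => hii (congrArg Prod.fst h))
          have hvx : v (i, false) = x := by rw [hpi₁, hvi₁]
          have hcne : a (i, true) ≠ b₀ := fun hcon => (ha i).ne (hf.trans hcon.symm)
          have hσc : σ (a (i, true)) = 0 := by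
            rw [hσval _ (i, true) hcne rfl, if_neg]
            intro hry
            exact hdisj (v (i, true)) (hvx ▸ (hKv i).reachable) hry
          have hσb : σ (a (i, false)) = 0 := by simp [hσ, hf]
          rw [hσb, hσc, add_zero]
        · by_cases hg : a (i, true) = b₀
          · have hpi₁ : (i, true) = i₁ :=
              (hmem (i, true) hg).resolve_right (fun h => hii (congrArg Prod.fst h))
            have hvx : v (i, true) = x := by rw [hpi₁, hvi₁]
            have hσc : σ (a (i, false)) = 0 := by
              rw [hσval _ (i, false) hf rfl, if_neg]
              intro hry
              exact hdisj (v (i, false)) (hvx ▸ (hKv i).symm.reachable) hry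
            have hσb : σ (a (i, true)) = 0 := by simp [hσ, hg]
            rw [hσb, hσc, add_zero]
          · have h1 := hσval _ (i, false) hf rfl
            have h2 := hσval _ (i, true) hg rfl
            have hiff : K.Reachable y (v (i, false)) ↔ K.Reachable y (v (i, true)) :=
              ⟨fun h => h.trans (hKv i).reachable, fun h => h.trans (hKv i).symm.reachable⟩
            rw [h1, h2]
            by_cases hr : K.Reachable y (v (i, false))
            · rw [if_pos hr, if_pos (hiff.mp hr)]; decide
            · rw [if_neg hr, if_neg (fun h => hr (hiff.mpr h)), add_zero]
    have hS1 : (∑ p : Fin k × Bool, σ (a p)) = 1 := by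
      rw [Fintype.sum_prod_type]
      have h' : ∀ i ∈ Finset.univ, (∑ s : Bool, σ (a (i, s))) =
          if i = ii₂ then (1 : ZMod 2) else 0 := by
        intro i _
        rw [Fintype.sum_bool, add_comm]
        exact hedge i
      rw [Finset.sum_congr rfl h']
      simp
    have hS0 : (∑ p : Fin k × Bool, σ (a p)) = 0 := by
      rw [← Finset.sum_fiberwise Finset.univ a (fun p => σ (a p))]
      apply Finset.sum_eq_zero
      intro b _
      have hconst : ∀ p ∈ Finset.univ.filter (fun p : Fin k × Bool => a p = b),
          σ (a p) = σ b := by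
        intro p hp; rw [(Finset.mem_filter.mp hp).2]
      rw [Finset.sum_congr rfl hconst, Finset.sum_const, hfib2 b, two_nsmul,
        CharTwo.add_self_eq_zero]
    exact one_ne_zero (hS1.symm.trans hS0)
  -- propagation of reachability from b₀ through H
  have master : ∀ (φ : Fin k × Bool → Prop),
      (∀ p, a p = b₀ → φ p) →
      (∀ i : Fin k, φ (i, false) → φ (i, true)) →
      (∀ i : Fin k, φ (i, true) → φ (i, false)) →
      (∀ p q, a p = a q → a q ≠ b₀ → φ p → φ q) →
      ∀ p, φ p := by
    intro φ hbase hf1 hf2 htrans p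
    suffices h : ∀ (b c : Fin t) (_wk : H.Walk b c), (∀ q, a q = c → φ q) →
        ∀ q, a q = b → φ q by
      obtain ⟨wk⟩ := hHconn.preconnected (a p) b₀
      exact h (a p) b₀ wk hbase p rfl
    intro b c wk
    induction wk with
    | nil => exact fun h => h
    | @cons u c' _ hadj wtail ih =>
      intro hend q hq
      by_cases hub : u = b₀
      · exact hbase q (hq.trans hub)
      · obtain ⟨i, hi, -⟩ := henum s(u, c') hadj
        rw [Sym2.eq_iff] at hi
        rcases hi with ⟨hu, hc⟩ | ⟨hu, hc⟩
        · exact htrans (i, false) q (hu.symm.trans hq.symm) (by rw [hq]; exact hub)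
            (hf2 i (ih hend (i, true) hc.symm))
        · exact htrans (i, true) q (hu.symm.trans hq.symm) (by rw [hq]; exact hub)
            (hf1 i (ih hend (i, false) hc.symm))
  have hfinal : ∀ p : Fin k × Bool, K.Reachable x (v p) ∧ K.Reachable x (w p) := by
    apply master
    · intro p hp
      rcases hpat p hp with ⟨h1, h2⟩ | ⟨h1, h2⟩
      · exact ⟨by rw [h1], by rw [h2]; exact hxyreach⟩
      · exact ⟨by rw [h1]; exact hxyreach, by rw [h2]⟩
    · intro i ⟨h1, h2⟩
      exact ⟨h1.trans (hKv i).reachable, h2.trans (hKw i).reachable⟩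
    · intro i ⟨h1, h2⟩
      exact ⟨h1.trans (hKv i).symm.reachable, h2.trans (hKw i).symm.reachable⟩
    · intro p q hpq hqb ⟨h1, h2⟩
      exact ⟨((hC1 (a q) hqb).1 p q hpq rfl) ▸ h1, ((hC1 (a q) hqb).2 p q hpq rfl) ▸ h2⟩
  refine Or.inr (Or.inr (fun i j => ?_))
  exact ⟨(hfinal i).1.symm.trans (hfinal j).1, (hfinal i).1.symm.trans (hfinal j).2,
    (hfinal i).2.symm.trans (hfinal j).1, (hfinal i).2.symm.trans (hfinal j).2⟩
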